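/- Let F = α + β be a Randers norm on ℝⁿ with b < 1, f a nonzero covector, A = √((1−b²)‖∇^α f‖²_α + ⟨β^♯,∇^α f⟩²). Then the Finsler gradient (inverse Legendre image of f) is given by ∇f = [(A − ⟨β^♯,∇^α f⟩)/(A(1−b²))] ∇^α f − [(A − ⟨β^♯,∇^α f⟩)²/(A(1−b²)²)] β^♯, where β^♯ has components b^i = a^{ij}b_j and ∇^α f has components a^{ij}f_j. -/

import Mathlib

/-!
Write `α = √(yᵀ a y)`, `β = b ⬝ y` and `F = α + β`. On the cone `α > 0` one has
`½ d(F²)_y = F (a y / α + b)`, and each component of this covector field is positively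
1-homogeneous, so Euler's identity turns `g_y(y, ·) = ½ ∂²(F²)_y (y, ·)` into
`L(y) = F (a y / α + b)` without computing any second derivative.

Inverting, `a⁻¹ L(y) = (F / α) y + F a⁻¹ b`, whence `⟨β♯, ∇^α f⟩ = F (β / α + b²)` and
`‖∇^α f‖²_α = F² (1 + 2 β / α + b²)`. These combine to `(1 - b²) ‖∇^α f‖²_α + ⟨β♯, ∇^α f⟩² = (F² / α)²`,
so `A = F² / α` and `A - ⟨β♯, ∇^α f⟩ = F (1 - b²)`: the two coefficients of the formula are `α / F`
and `α`. Cauchy–Schwarz gives `|β| ≤ b α < α`, so `F > 0`.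
-/

open Matrix

/-- The fundamental tensor `g_{ij}(y) = (1/2)[F²]_{y^i y^j}(y)`. -/
noncomputable def gmat {n : ℕ} (F : (Fin n → ℝ) → ℝ) (y : Fin n → ℝ) :
    Matrix (Fin n) (Fin n) ℝ := fun i j =>
  (1 / 2) * fderiv ℝ (fun z => fderiv ℝ (fun w => (F w) ^ 2) z (Pi.single i 1)) y (Pi.single j 1)

theorem fderiv_apply_self_of_homogeneous {E : Type*} [NormedAddCommGroup E] [NormedSpace ℝ E]
    {φ : E → ℝ} {y : E} {k : ℕ} (hφ : DifferentiableAt ℝ φ y)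
    (hom : ∀ t : ℝ, 0 < t → φ (t • y) = t ^ k * φ y) :
    fderiv ℝ φ y y = k * φ y := by
  rw [← hφ.lineDeriv_eq_fderiv]
  apply HasLineDerivAt.lineDeriv
  have hpow : HasDerivAt (fun t : ℝ => (1 + t) ^ k * φ y) (k * φ y) 0 := by
    simpa using (((hasDerivAt_id (0 : ℝ)).const_add 1).pow k).mul_const (φ y)
  refine hpow.congr_of_eventuallyEq ?_
  filter_upwards [lt_mem_nhds (show (-1 : ℝ) < 0 by norm_num)] with t ht
  rw [← hom (1 + t) (by linarith), add_smul, one_smul]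

theorem gmat_mulVec_self_apply {n : ℕ} (F : (Fin n → ℝ) → ℝ) (y : Fin n → ℝ) (i : Fin n) :
    (gmat F y *ᵥ y) i
      = 1 / 2 * fderiv ℝ (fun z => fderiv ℝ (fun w => F w ^ 2) z (Pi.single i 1)) y y := by
  set L := fderiv ℝ (fun z => fderiv ℝ (fun w => F w ^ 2) z (Pi.single i 1)) y
  conv_rhs => rw [pi_eq_sum_univ' y]
  simp only [gmat, mulVec, dotProduct, L, map_sum, map_smul, smul_eq_mul, Finset.mul_sum]
  exact Finset.sum_congr rfl fun j _ => by ring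

section LinearAlgebra

variable {ι : Type*} [Fintype ι] {a : Matrix ι ι ℝ}

theorem Matrix.IsSymm.mulVec_dotProduct (ha : a.IsSymm) (v w : ι → ℝ) :
    a *ᵥ v ⬝ᵥ w = v ⬝ᵥ a *ᵥ w := by
  rw [dotProduct_mulVec, ← mulVec_transpose, ha.eq]

variable [DecidableEq ι]

theorem Matrix.mulVec_inv_mulVec (ha : IsUnit a.det) (v : ι → ℝ) : a *ᵥ (a⁻¹ *ᵥ v) = v := by
  rw [mulVec_mulVec, mul_nonsing_inv _ ha, one_mulVec]

theorem Matrix.inv_mulVec_mulVec (ha : IsUnit a.det) (v : ι → ℝ) : a⁻¹ *ᵥ (a *ᵥ v) = v := by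
  rw [mulVec_mulVec, nonsing_inv_mul _ ha, one_mulVec]

theorem Matrix.PosDef.sq_dotProduct_le (ha : a.PosDef) (b y : ι → ℝ) :
    (b ⬝ᵥ y) ^ 2 ≤ (b ⬝ᵥ a⁻¹ *ᵥ b) * (y ⬝ᵥ a *ᵥ y) := by
  have hsym := isHermitian_iff_isSymm.1 ha.isHermitian
  have hab : a *ᵥ (a⁻¹ *ᵥ b) = b := mulVec_inv_mulVec ((isUnit_iff_isUnit_det a).1 ha.isUnit) b
  have hCS := LinearMap.BilinForm.apply_mul_apply_le_of_forall_zero_le (toLinearMap₂' ℝ a)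
    (fun x => by simpa only [toLinearMap₂'_apply', star_trivial]
      using ha.posSemidef.dotProduct_mulVec_nonneg x) y (a⁻¹ *ᵥ b)
  have hcross : a⁻¹ *ᵥ b ⬝ᵥ a *ᵥ y = b ⬝ᵥ y := by rw [← hsym.mulVec_dotProduct, hab]
  simp only [toLinearMap₂'_apply', hcross, hab, dotProduct_comm y b,
    dotProduct_comm (a⁻¹ *ᵥ b) b] at hCS
  nlinarith [hCS]

end LinearAlgebra

section Randers

variable {ι : Type*} [Fintype ι]

noncomputable def randersNorm (a : Matrix ι ι ℝ) (b y : ι → ℝ) : ℝ := √(y ⬝ᵥ a *ᵥ y) + b ⬝ᵥ y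

/-- In coordinates, the Legendre transform `y ↦ g_y(y, ·) = ½ d(F²)_y` of the Randers norm. -/
noncomputable def randersLegendre (a : Matrix ι ι ℝ) (b y : ι → ℝ) : ι → ℝ :=
  randersNorm a b y • ((√(y ⬝ᵥ a *ᵥ y))⁻¹ • a *ᵥ y + b)

variable {a : Matrix ι ι ℝ} {b : ι → ℝ}

theorem hasLineDerivAt_dotProduct_mulVec_self (ha : a.IsSymm) (z v : ι → ℝ) :
    HasLineDerivAt ℝ (fun w => w ⬝ᵥ a *ᵥ w) (2 * ((a *ᵥ z) ⬝ᵥ v)) z v := by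
  have hexp : (fun t : ℝ => (z + t • v) ⬝ᵥ a *ᵥ (z + t • v))
      = fun t => z ⬝ᵥ a *ᵥ z + t * (2 * ((a *ᵥ z) ⬝ᵥ v)) + t ^ 2 * (v ⬝ᵥ a *ᵥ v) := by
    ext t
    simp only [mulVec_add, mulVec_smul, dotProduct_add, add_dotProduct, dotProduct_smul,
      smul_dotProduct, smul_eq_mul, ← ha.mulVec_dotProduct z v, dotProduct_comm v (a *ᵥ z)]
    ring
  rw [HasLineDerivAt, hexp]
  simpa using ((hasDerivAt_mul_const (2 * ((a *ᵥ z) ⬝ᵥ v))).const_add (z ⬝ᵥ a *ᵥ z)).fun_add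
    ((hasDerivAt_pow 2 (0 : ℝ)).mul_const (v ⬝ᵥ a *ᵥ v))

theorem hasLineDerivAt_dotProduct (b z v : ι → ℝ) :
    HasLineDerivAt ℝ (fun w => b ⬝ᵥ w) (b ⬝ᵥ v) z v := by
  simp only [HasLineDerivAt, dotProduct_add, dotProduct_smul, smul_eq_mul]
  exact (hasDerivAt_mul_const _).const_add _

theorem hasLineDerivAt_randersNorm_sq (ha : a.IsSymm) {z : ι → ℝ} (hz : 0 < z ⬝ᵥ a *ᵥ z)
    (v : ι → ℝ) :
    HasLineDerivAt ℝ (fun w => randersNorm a b w ^ 2) (2 * (randersLegendre a b z ⬝ᵥ v)) z v := by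
  have hα := HasDerivAt.sqrt (hasLineDerivAt_dotProduct_mulVec_self ha z v)
    (by simpa using hz.ne')
  have h := (hα.fun_add (hasLineDerivAt_dotProduct b z v)).pow 2
  simp only [zero_smul, add_zero] at h
  refine h.congr_deriv ?_
  have : 0 < √(z ⬝ᵥ a *ᵥ z) := Real.sqrt_pos.2 hz
  simp only [randersLegendre, randersNorm, smul_dotProduct, add_dotProduct, smul_eq_mul]
  field_simp
  ring

theorem differentiableAt_randersNorm {z : ι → ℝ} (hz : 0 < z ⬝ᵥ a *ᵥ z) :
    DifferentiableAt ℝ (randersNorm a b) z := by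
  have hz' := hz.ne'
  unfold randersNorm
  simp only [dotProduct, mulVec] at hz' ⊢
  fun_prop (disch := assumption)

theorem differentiableAt_randersLegendre {z : ι → ℝ} (hz : 0 < z ⬝ᵥ a *ᵥ z) :
    DifferentiableAt ℝ (randersLegendre a b) z := by
  have hz' := hz.ne'
  have hs := (Real.sqrt_pos.2 hz).ne'
  rw [differentiableAt_pi]
  intro i
  simp only [randersLegendre, randersNorm, dotProduct, mulVec, Pi.smul_apply, Pi.add_apply,
    smul_eq_mul] at hz' hs ⊢
  fun_prop (disch := assumption)

theorem fderiv_randersNorm_sq_apply (ha : a.IsSymm) {z : ι → ℝ} (hz : 0 < z ⬝ᵥ a *ᵥ z)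
    (v : ι → ℝ) :
    fderiv ℝ (fun w => randersNorm a b w ^ 2) z v = 2 * (randersLegendre a b z ⬝ᵥ v) := by
  rw [← ((differentiableAt_randersNorm hz).fun_pow 2).lineDeriv_eq_fderiv]
  exact (hasLineDerivAt_randersNorm_sq ha hz v).lineDeriv

theorem sqrt_smul_dotProduct_mulVec_smul {t : ℝ} (ht : 0 ≤ t) (z : ι → ℝ) :
    √((t • z) ⬝ᵥ a *ᵥ (t • z)) = t * √(z ⬝ᵥ a *ᵥ z) := by
  rw [mulVec_smul, dotProduct_smul, smul_dotProduct, smul_eq_mul, smul_eq_mul, ← mul_assoc,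
    Real.sqrt_mul (mul_self_nonneg t), Real.sqrt_mul_self ht]

theorem randersNorm_smul {t : ℝ} (ht : 0 ≤ t) (z : ι → ℝ) :
    randersNorm a b (t • z) = t * randersNorm a b z := by
  rw [randersNorm, randersNorm, sqrt_smul_dotProduct_mulVec_smul ht, dotProduct_smul, smul_eq_mul,
    mul_add]

theorem randersLegendre_smul {t : ℝ} (ht : 0 < t) (z : ι → ℝ) :
    randersLegendre a b (t • z) = t • randersLegendre a b z := by
  rw [randersLegendre, randersLegendre, randersNorm_smul ht.le,
    sqrt_smul_dotProduct_mulVec_smul ht.le, mulVec_smul, smul_smul, mul_inv, mul_comm t⁻¹,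
    inv_mul_cancel_right₀ ht.ne', mul_smul]

variable [DecidableEq ι]

theorem randersNorm_pos (ha : a.PosDef) (hb : b ⬝ᵥ (a⁻¹ *ᵥ b) < 1) {y : ι → ℝ} (hy : y ≠ 0) :
    0 < randersNorm a b y := by
  have hQ : 0 < y ⬝ᵥ a *ᵥ y := by simpa using ha.dotProduct_mulVec_pos hy
  have hα : √(y ⬝ᵥ a *ᵥ y) ^ 2 = y ⬝ᵥ a *ᵥ y := Real.sq_sqrt hQ.le
  have hCS := ha.sq_dotProduct_le b y
  have hlt : (b ⬝ᵥ y) ^ 2 < √(y ⬝ᵥ a *ᵥ y) ^ 2 := by nlinarith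
  have habs := abs_lt_of_sq_lt_sq' hlt (Real.sqrt_nonneg _)
  rw [randersNorm]
  linarith [habs.1]

theorem eq_of_randersLegendre_eq (ha : a.PosDef) (hb : b ⬝ᵥ (a⁻¹ *ᵥ b) < 1) {y f : ι → ℝ}
    (hy : y ≠ 0) (hf : randersLegendre a b y = f) :
    y = ((√((1 - b ⬝ᵥ (a⁻¹ *ᵥ b)) * (f ⬝ᵥ (a⁻¹ *ᵥ f)) + (b ⬝ᵥ (a⁻¹ *ᵥ f)) ^ 2)
            - b ⬝ᵥ (a⁻¹ *ᵥ f)) /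
          (√((1 - b ⬝ᵥ (a⁻¹ *ᵥ b)) * (f ⬝ᵥ (a⁻¹ *ᵥ f)) + (b ⬝ᵥ (a⁻¹ *ᵥ f)) ^ 2)
            * (1 - b ⬝ᵥ (a⁻¹ *ᵥ b)))) • (a⁻¹ *ᵥ f)
        - ((√((1 - b ⬝ᵥ (a⁻¹ *ᵥ b)) * (f ⬝ᵥ (a⁻¹ *ᵥ f)) + (b ⬝ᵥ (a⁻¹ *ᵥ f)) ^ 2)
            - b ⬝ᵥ (a⁻¹ *ᵥ f)) ^ 2 /
          (√((1 - b ⬝ᵥ (a⁻¹ *ᵥ b)) * (f ⬝ᵥ (a⁻¹ *ᵥ f)) + (b ⬝ᵥ (a⁻¹ *ᵥ f)) ^ 2)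
            * (1 - b ⬝ᵥ (a⁻¹ *ᵥ b)) ^ 2)) • (a⁻¹ *ᵥ b) := by
  have hsym := isHermitian_iff_isSymm.1 ha.isHermitian
  have hdet := (isUnit_iff_isUnit_det a).1 ha.isUnit
  have hQ : 0 < y ⬝ᵥ a *ᵥ y := by simpa using ha.dotProduct_mulVec_pos hy
  have hF := randersNorm_pos ha hb hy
  have hb' : 1 - b ⬝ᵥ (a⁻¹ *ᵥ b) ≠ 0 := by linarith
  have hα : 0 < √(y ⬝ᵥ a *ᵥ y) := Real.sqrt_pos.2 hQ
  have hα2 : y ⬝ᵥ a *ᵥ y = √(y ⬝ᵥ a *ᵥ y) ^ 2 := (Real.sq_sqrt hQ.le).symm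
  have hyb : a *ᵥ y ⬝ᵥ (a⁻¹ *ᵥ b) = b ⬝ᵥ y := by
    rw [hsym.mulVec_dotProduct, mulVec_inv_mulVec hdet, dotProduct_comm]
  subst hf
  set α := √(y ⬝ᵥ a *ᵥ y)
  set F := randersNorm a b y
  set β := b ⬝ᵥ y
  set b2 := b ⬝ᵥ (a⁻¹ *ᵥ b)
  have hFαβ : F = α + β := rfl
  have hL : randersLegendre a b y = (F / α) • (a *ᵥ y) + F • b := by
    rw [randersLegendre, smul_add, smul_smul, div_eq_mul_inv]
  have hinv : a⁻¹ *ᵥ randersLegendre a b y = (F / α) • y + F • (a⁻¹ *ᵥ b) := by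
    rw [hL, mulVec_add, mulVec_smul, mulVec_smul, inv_mulVec_mulVec hdet]
  have hbf : b ⬝ᵥ (a⁻¹ *ᵥ randersLegendre a b y) = F * (β / α + b2) := by
    rw [hinv, dotProduct_add, dotProduct_smul, dotProduct_smul, smul_eq_mul, smul_eq_mul]
    ring
  have hff : randersLegendre a b y ⬝ᵥ (a⁻¹ *ᵥ randersLegendre a b y)
      = F ^ 2 * (1 + 2 * (β / α) + b2) := by
    rw [hinv, hL]
    simp only [add_dotProduct, smul_dotProduct, dotProduct_add, dotProduct_smul, smul_eq_mul, hyb,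
      dotProduct_comm (a *ᵥ y) y, hα2]
    field_simp
    ring
  have hA : √((1 - b2) * (randersLegendre a b y ⬝ᵥ (a⁻¹ *ᵥ randersLegendre a b y))
      + (b ⬝ᵥ (a⁻¹ *ᵥ randersLegendre a b y)) ^ 2) = F ^ 2 / α := by
    rw [hff, hbf, ← Real.sqrt_sq (by positivity : 0 ≤ F ^ 2 / α)]
    congr 1
    field_simp
    rw [hFαβ]
    ring
  rw [hA, hbf, hinv]
  match_scalars <;> field_simp <;> rw [hFαβ] <;> ring

end Randers

theorem gmat_randersNorm_mulVec_self {n : ℕ} {a : Matrix (Fin n) (Fin n) ℝ} (ha : a.IsSymm)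
    (b : Fin n → ℝ) {y : Fin n → ℝ} (hy : 0 < y ⬝ᵥ a *ᵥ y) :
    gmat (randersNorm a b) y *ᵥ y = randersLegendre a b y := by
  ext i
  have hQ : Continuous fun z : Fin n → ℝ => z ⬝ᵥ a *ᵥ z := by
    simp only [dotProduct, mulVec]
    fun_prop
  have hev : (fun z => fderiv ℝ (fun w => randersNorm a b w ^ 2) z (Pi.single i 1))
      =ᶠ[nhds y] fun z => 2 * randersLegendre a b z i := by
    filter_upwards [continuousAt_const.eventually_lt hQ.continuousAt hy] with z hz
    rw [fderiv_randersNorm_sq_apply ha hz, dotProduct_single_one]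
  have hdiff : DifferentiableAt ℝ (fun z => 2 * randersLegendre a b z i) y :=
    (differentiableAt_pi.1 (differentiableAt_randersLegendre hy) i).const_mul 2
  rw [gmat_mulVec_self_apply, hev.fderiv_eq, fderiv_apply_self_of_homogeneous (k := 1) hdiff]
  · ring
  · intro t ht
    rw [randersLegendre_smul ht, Pi.smul_apply, smul_eq_mul]
    ring

theorem stmt_15_general {n : ℕ} (a : Matrix (Fin n) (Fin n) ℝ) (ha : a.PosDef) (b : Fin n → ℝ)
    (b2 : ℝ) (hb2 : b2 = b ⬝ᵥ (a⁻¹ *ᵥ b)) (hb : b2 < 1)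
    (F : (Fin n → ℝ) → ℝ) (hF : ∀ y, F y = Real.sqrt (y ⬝ᵥ a *ᵥ y) + b ⬝ᵥ y)
    (f : Fin n → ℝ)
    (A : ℝ)
    (hA : A = Real.sqrt ((1 - b2) * (f ⬝ᵥ (a⁻¹ *ᵥ f)) + (b ⬝ᵥ (a⁻¹ *ᵥ f)) ^ 2))
    -- y = ∇f = L⁻¹(f) : the inverse Legendre image of f
    (y : Fin n → ℝ) (hy : y ≠ 0) (hLy : (gmat F y) *ᵥ y = f) :
    y = ((A - b ⬝ᵥ (a⁻¹ *ᵥ f)) / (A * (1 - b2))) • (a⁻¹ *ᵥ f)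
        - ((A - b ⬝ᵥ (a⁻¹ *ᵥ f)) ^ 2 / (A * (1 - b2) ^ 2)) • (a⁻¹ *ᵥ b) := by
  have hsym : a.IsSymm := isHermitian_iff_isSymm.1 ha.isHermitian
  obtain rfl : F = randersNorm a b := funext hF
  subst hb2 hA
  rw [gmat_randersNorm_mulVec_self hsym b (by simpa using ha.dotProduct_mulVec_pos hy)] at hLy
  exact eq_of_randersLegendre_eq ha hb hy hLy

theorem stmt_15 {n : ℕ} (a : Matrix (Fin n) (Fin n) ℝ) (ha : a.PosDef) (b : Fin n → ℝ)
    (b2 : ℝ) (hb2 : b2 = b ⬝ᵥ (a⁻¹ *ᵥ b)) (hb : b2 < 1)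
    (F : (Fin n → ℝ) → ℝ) (hF : ∀ y, F y = Real.sqrt (y ⬝ᵥ a *ᵥ y) + b ⬝ᵥ y)
    (f : Fin n → ℝ) (hf : f ≠ 0)
    (A : ℝ)
    (hA : A = Real.sqrt ((1 - b2) * (f ⬝ᵥ (a⁻¹ *ᵥ f)) + (b ⬝ᵥ (a⁻¹ *ᵥ f)) ^ 2))
    -- y = ∇f = L⁻¹(f) : the inverse Legendre image of f
    (y : Fin n → ℝ) (hy : y ≠ 0) (hLy : (gmat F y) *ᵥ y = f) :
    y = ((A - b ⬝ᵥ (a⁻¹ *ᵥ f)) / (A * (1 - b2))) • (a⁻¹ *ᵥ f)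
        - ((A - b ⬝ᵥ (a⁻¹ *ᵥ f)) ^ 2 / (A * (1 - b2) ^ 2)) • (a⁻¹ *ᵥ b) :=
  stmt_15_general a ha b b2 hb2 hb F hF f A hA y hy hLy
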